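/- If S is a set of vertices of the infinite cubic tree T_∞ and f(u*,S) > 0 for some vertex u* of T_∞, then S is not an exponentially independent set in T_∞. -/

import Mathlib

open SimpleGraph
open scoped Classical ENNReal

/-- The graph obtained from `G` by deleting the vertices of `A`
(they are kept as isolated vertices, which does not affect adjacency or distances
among the remaining vertices). -/
def SimpleGraph.deleteSet {V : Type*} (G : SimpleGraph V) (A : Set V) : SimpleGraph V where
  Adj x y := G.Adj x y ∧ x ∉ A ∧ y ∉ A
  symm := ⟨fun _ _ ⟨h, hx, hy⟩ => ⟨h.symm, hy, hx⟩⟩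
  loopless := ⟨fun x ⟨h, _, _⟩ => G.loopless.irrefl x h⟩

/-- `dist_{(G,S)}(u,v)`: the distance between `u` and `v` in `G - (S \ {u,v})`,
with value `⊤` if there is no path between `u` and `v` in that graph. -/
noncomputable def distDel {V : Type*} (G : SimpleGraph V) (S : Set V) (u v : V) : ℕ∞ :=
  (G.deleteSet (S \ {u, v})).edist u v

/-- `w_{(G,S)}(u) = Σ_{v ∈ S} (1/2)^{dist_{(G,S)}(u,v) - 1}`, a sum with values in `[0,∞]`
in which a summand with infinite distance equals `0`. -/
noncomputable def expWSet {V : Type*} (G : SimpleGraph V) (S : Set V) (u : V) : ℝ≥0∞ :=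
  ∑' v : S, if distDel G S u (v : V) = ⊤ then 0
    else 2 * (2⁻¹ : ℝ≥0∞) ^ (distDel G S u (v : V)).toNat

/-- `S` is exponentially independent in `G`: `w_{(G,S∖{u})}(u) < 1` for every `u ∈ S`. -/
def ExpIndepSet {V : Type*} (G : SimpleGraph V) (S : Set V) : Prop :=
  ∀ u ∈ S, expWSet G (S \ {u}) u < 1

/-- `G` is an infinite cubic tree: a connected acyclic graph on a countably infinite
vertex set in which every vertex has degree `3`. -/
def IsInfCubicTree {V : Type*} (G : SimpleGraph V) : Prop :=
  Countable V ∧ Infinite V ∧ G.Connected ∧ G.IsAcyclic ∧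
    ∀ v : V, (G.neighborSet v).encard = 3

/-- `f(u,S) = limsup_{k→∞} |S ∩ B^k(u)| / |B^k(u)|`, where `B^k(u)` is the ball of
radius `k` around `u`, of cardinality `3·2^k - 2` in the infinite cubic tree. -/
noncomputable def ballDensity {V : Type*} (G : SimpleGraph V) (S : Set V) (u : V) : ℝ :=
  Filter.limsup (fun k : ℕ =>
    ((S ∩ {v : V | G.edist u v ≤ (k : ℕ∞)}).ncard : ℝ) / (3 * 2 ^ k - 2)) Filter.atTop

/-!
Fix `u ∈ S`. Every other `s ∈ S` reachable from `u` has a *parent* `v ∈ S ∖ {s}` on a shortest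
`u`–`s` path such that some shortest `v`–`s` path meets `S` only at its ends; among the vertices of
`S ∖ {s}` on shortest `u`–`s` paths, take one closest to `s`. Then
`2^{-d(u,s)} = 2^{-d(u,v)} 2^{-d(v,s)}`, and exponential independence at `v` gives
`∑ 2^{-d(v,s)} ≤ 1/2` over the children `s` of `v`. By induction on the radius,
`∑_{s ∈ S} 2^{-d(u,s)} ≤ 1 + (1/2) · 2 = 2`. Hence `S` has `o(2^k)` vertices within distance `k`
of any vertex, whereas the balls of `T_∞` have `3·2^k − 2` vertices, so the density of `S` is `0`.
-/

open Filter Topology Finset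

lemma tendsto_card_mul_pow_of_sum_le {α : Type*} {T : ℕ → Finset α} (hT : Monotone T)
    {w : α → ℝ} {r C : ℝ} (hr₀ : 0 ≤ r) (hr₁ : r < 1) (hw : ∀ m, ∀ s ∈ T m, r ^ m ≤ w s)
    (hC : ∀ m, ∑ s ∈ T m, w s ≤ C) :
    Tendsto (fun m => ((T m).card : ℝ) * r ^ m) atTop (𝓝 0) := by
  set P : ℕ → ℝ := fun m => ∑ s ∈ T m, w s
  have hP : Monotone P := fun m n hmn =>
    sum_le_sum_of_subset_of_nonneg (hT hmn) fun s hs _ => (pow_nonneg hr₀ n).trans (hw n s hs)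
  have hPlim := tendsto_atTop_ciSup hP ⟨C, by rintro _ ⟨m, rfl⟩; exact hC m⟩
  have htail (J m : ℕ) (hJm : J ≤ m) :
      ((T m).card : ℝ) * r ^ m ≤ (T J).card * r ^ m + (P m - P J) := by
    have hnew : ((T m \ T J).card : ℝ) * r ^ m ≤ P m - P J := by
      rw [show P m - P J = ∑ s ∈ T m \ T J, w s by
        simp only [P, ← sum_sdiff (hT hJm), add_sub_cancel_right], ← nsmul_eq_mul]
      exact card_nsmul_le_sum _ _ _ fun s hs => hw m s (mem_sdiff.1 hs).1
    rw [← card_sdiff_add_card_eq_card (hT hJm)]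
    push_cast
    linarith
  refine tendsto_order.2 ⟨fun a ha => .of_forall fun m => ha.trans_le (by positivity),
    fun ε hε => ?_⟩
  obtain ⟨J, hJ⟩ := (hPlim.eventually (lt_mem_nhds (sub_lt_self _ (half_pos hε)))).exists
  have hsmall := ((tendsto_pow_atTop_nhds_zero_of_lt_one hr₀ hr₁).const_mul
    ((T J).card : ℝ)).eventually (gt_mem_nhds (by rw [mul_zero]; exact half_pos hε))
  filter_upwards [hsmall, eventually_ge_atTop J] with m hm hJm
  linarith [htail J m hJm, hP.ge_of_tendsto hPlim m]

namespace SimpleGraph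

variable {V : Type*} {G : SimpleGraph V}

lemma reachable_of_edist_le {u v : V} {n : ℕ} (h : G.edist u v ≤ n) : G.Reachable u v :=
  reachable_of_edist_ne_top (ne_top_of_le_ne_top (ENat.natCast_ne_top n) h)

lemma dist_le_of_edist_le {u v : V} {n : ℕ} (h : G.edist u v ≤ n) : G.dist u v ≤ n := by
  rwa [← ENat.natCast_le_natCast, (reachable_of_edist_le h).coe_dist_eq_edist]

lemma Walk.dist_add_dist_le_length {u v x : V} (p : G.Walk u v) (hx : x ∈ p.support) :
    G.dist u x + G.dist x v ≤ p.length := by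
  rw [← p.take_spec hx, Walk.length_append]
  exact Nat.add_le_add (dist_le _) (dist_le _)

lemma edist_deleteSet_le_length {A : Set V} {u v : V} (p : G.Walk u v)
    (hp : ∀ x ∈ p.support, x ∉ A) : (G.deleteSet A).edist u v ≤ p.length := by
  refine (edist_le (p.transfer (G.deleteSet A) fun e he => ?_)).trans_eq (by simp)
  induction e using Sym2.ind with
  | _ x y =>
    exact ⟨p.adj_of_mem_edges he, hp x (p.fst_mem_support_of_mem_edges he),
      hp y (p.snd_mem_support_of_mem_edges he)⟩

lemma exists_parent {S : Set V} {u s : V} (hu : u ∈ S) (hsu : s ≠ u)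
    (hus : G.Reachable u s) :
    ∃ v ∈ S, G.Reachable u v ∧ G.dist u v < G.dist u s ∧
      G.dist u v + G.dist v s = G.dist u s ∧ distDel G (S \ {v}) v s ≤ G.dist v s := by
  have hP : ∃ n, ∃ v ∈ S, v ≠ s ∧ G.Reachable u v ∧
      G.dist u v + G.dist v s = G.dist u s ∧ G.dist v s = n :=
    ⟨_, u, hu, hsu.symm, .refl u, by simp, rfl⟩
  obtain ⟨v, hvS, hvs, huv, hgeo, hvn⟩ := Nat.find_spec hP
  have hvs' : G.Reachable v s := huv.symm.trans hus
  obtain ⟨w, hw⟩ := hvs'.exists_walk_length_eq_dist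
  refine ⟨v, hvS, huv, ?_, hgeo, ?_⟩
  · have := hvs'.pos_dist_of_ne hvs
    omega
  refine (edist_deleteSet_le_length w ?_).trans_eq (by rw [hw])
  rintro x hx ⟨⟨hxS, -⟩, hxvs⟩
  simp only [Set.mem_insert_iff, Set.mem_singleton_iff, not_or] at hxvs
  have hvx : G.Reachable v x := ⟨w.takeUntil x hx⟩
  have hsplit := w.dist_add_dist_le_length hx
  have hpos := hvx.pos_dist_of_ne (Ne.symm hxvs.1)
  have hux := huv.dist_triangle_left x
  have hus' := (huv.trans hvx).dist_triangle_left s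
  have := Nat.find_min' hP ⟨x, hxS, hxvs.2, huv.trans hvx, by omega, rfl⟩
  omega

lemma sum_inv_two_pow_le_of_expWSet_lt_one {T : Set V} {u : V} (hw : expWSet G T u < 1)
    {F : Finset V} (hFT : ↑F ⊆ T) {n : V → ℕ} (hn : ∀ s ∈ F, distDel G T u s ≤ n s) :
    ∑ s ∈ F, (2⁻¹ : ℝ) ^ n s ≤ 2⁻¹ := by
  have hle : ∑ s ∈ F, 2 * (2⁻¹ : ENNReal) ^ n s ≤ 1 := by
    refine le_trans ?_ hw.le
    rw [expWSet, tsum_subtype T fun v => if distDel G T u v = ⊤ then 0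
      else 2 * (2⁻¹ : ENNReal) ^ (distDel G T u v).toNat]
    refine (sum_le_sum fun s hs => ?_).trans (ENNReal.sum_le_tsum F)
    have hfin : distDel G T u s ≠ ⊤ := ne_top_of_le_ne_top (ENat.natCast_ne_top _) (hn s hs)
    rw [Set.indicator_of_mem (hFT hs), if_neg hfin]
    gcongr 2 * ?_
    exact pow_le_pow_of_le_one zero_le (ENNReal.inv_le_one.2 one_le_two)
      (ENat.toNat_le_of_le_natCast (hn s hs))
  have hreal := ENNReal.toReal_le_of_le_ofReal zero_le_one (by simpa using hle)
  rw [ENNReal.toReal_sum fun s _ => by finiteness] at hreal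
  simp only [ENNReal.toReal_mul, ENNReal.toReal_pow, ENNReal.toReal_inv,
    ENNReal.toReal_ofNat] at hreal
  rw [← mul_sum] at hreal
  linarith

theorem ExpIndepSet.sum_inv_two_pow_dist_le_two {S : Set V} (hS : ExpIndepSet G S) {u : V}
    (hu : u ∈ S) (r : ℕ) (F : Finset V) (hFS : ↑F ⊆ S)
    (hF : ∀ s ∈ F, G.Reachable u s ∧ G.dist u s < r) :
    ∑ s ∈ F, (2⁻¹ : ℝ) ^ G.dist u s ≤ 2 := by
  induction r generalizing F with
  | zero =>
    rw [Finset.eq_empty_of_forall_notMem fun s hs => Nat.not_lt_zero _ (hF s hs).2]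
    norm_num
  | succ r ih =>
    have hparent (s : V) (hs : s ∈ F.erase u) : ∃ v ∈ S, G.Reachable u v ∧
        G.dist u v < G.dist u s ∧ G.dist u v + G.dist v s = G.dist u s ∧
          distDel G (S \ {v}) v s ≤ G.dist v s :=
      exists_parent hu (ne_of_mem_erase hs) (hF s (mem_of_mem_erase hs)).1
    choose! p hpS hpu hplt hpgeo hpdel using hparent
    have hparents : ∑ v ∈ (F.erase u).image p, (2⁻¹ : ℝ) ^ G.dist u v ≤ 2 := by
      refine ih _ (by rw [coe_image, Set.image_subset_iff]; exact hpS) fun v hv => ?_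
      obtain ⟨s, hs, rfl⟩ := mem_image.1 hv
      have := (hF s (mem_of_mem_erase hs)).2
      exact ⟨hpu s hs, by have := hplt s hs; omega⟩
    have hchildren (v : V) (hv : v ∈ (F.erase u).image p) :
        ∑ s ∈ (F.erase u).filter (p · = v), (2⁻¹ : ℝ) ^ G.dist u s ≤
          (2⁻¹ : ℝ) ^ G.dist u v * 2⁻¹ := by
      obtain ⟨s₀, hs₀, rfl⟩ := mem_image.1 hv
      have hchild {s : V} (hs : s ∈ (F.erase u).filter (p · = p s₀)) :
          s ∈ F.erase u ∧ p s = p s₀ := mem_filter.1 hs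
      calc ∑ s ∈ (F.erase u).filter (p · = p s₀), (2⁻¹ : ℝ) ^ G.dist u s
          = ∑ s ∈ (F.erase u).filter (p · = p s₀),
              (2⁻¹ : ℝ) ^ G.dist u (p s₀) * (2⁻¹ : ℝ) ^ G.dist (p s₀) s := by
            refine sum_congr rfl fun s hs => ?_
            rw [← pow_add, ← (hchild hs).2, hpgeo s (hchild hs).1]
        _ ≤ (2⁻¹ : ℝ) ^ G.dist u (p s₀) * 2⁻¹ := by
            rw [← mul_sum]
            gcongr
            refine sum_inv_two_pow_le_of_expWSet_lt_one (hS _ (hpS s₀ hs₀)) (fun s hs => ?_)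
              fun s hs => (hchild hs).2 ▸ hpdel s (hchild hs).1
            obtain ⟨hsF, hps⟩ := hchild hs
            exact ⟨hFS (mem_of_mem_erase hsF), fun hsp =>
              (hplt s hsF).ne (by rw [hps, ← Set.mem_singleton_iff.1 hsp])⟩
    calc ∑ s ∈ F, (2⁻¹ : ℝ) ^ G.dist u s
        ≤ ∑ s ∈ insert u (F.erase u), (2⁻¹ : ℝ) ^ G.dist u s :=
          sum_le_sum_of_subset_of_nonneg (insert_erase_subset u F) fun _ _ _ => by positivity
      _ = 1 + ∑ v ∈ (F.erase u).image p,
            ∑ s ∈ (F.erase u).filter (p · = v), (2⁻¹ : ℝ) ^ G.dist u s := by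
          rw [sum_insert (notMem_erase u F), dist_self, pow_zero,
            sum_fiberwise_of_maps_to fun s hs => mem_image_of_mem p hs]
      _ ≤ 1 + ∑ v ∈ (F.erase u).image p, (2⁻¹ : ℝ) ^ G.dist u v * 2⁻¹ := by
          gcongr with v hv
          exact hchildren v hv
      _ ≤ 2 := by
          rw [← sum_mul]
          linarith

theorem ExpIndepSet.finite_inter_edist_le {S : Set V} (hS : ExpIndepSet G S) {u : V}
    (hu : u ∈ S) (m : ℕ) : (S ∩ {v | G.edist u v ≤ m}).Finite := by
  by_contra hinf
  obtain ⟨F, hFsub, hcard⟩ := Set.Infinite.exists_subset_card_eq hinf (2 ^ (m + 1) + 1)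
  have hball (s : V) (hs : s ∈ F) : G.edist u s ≤ m := (hFsub hs).2
  have hlower := card_nsmul_le_sum F (fun s => (2⁻¹ : ℝ) ^ G.dist u s) (2⁻¹ ^ m) fun s hs =>
    pow_le_pow_of_le_one (by norm_num) (by norm_num) (dist_le_of_edist_le (hball s hs))
  have hupper := hS.sum_inv_two_pow_dist_le_two hu (m + 1) F (hFsub.trans Set.inter_subset_left)
    fun s hs => ⟨reachable_of_edist_le (hball s hs),
      Nat.lt_succ_of_le (dist_le_of_edist_le (hball s hs))⟩
  have hpow : (2 : ℝ) ^ m * 2⁻¹ ^ m = 1 := by rw [← mul_pow]; norm_num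
  rw [hcard, nsmul_eq_mul] at hlower
  push_cast at hlower
  rw [pow_succ, add_mul, mul_right_comm, hpow] at hlower
  linarith [pow_pos (by norm_num : (0 : ℝ) < 2⁻¹) m]

theorem ExpIndepSet.tendsto_ncard_inter_edist_le_mul {S : Set V} (hS : ExpIndepSet G S)
    {u : V} (hu : u ∈ S) :
    Tendsto (fun m : ℕ => ((S ∩ {v | G.edist u v ≤ m}).ncard : ℝ) * 2⁻¹ ^ m) atTop (𝓝 0) := by
  have hfin := hS.finite_inter_edist_le hu
  have hmono : Monotone fun m : ℕ => S ∩ {v | G.edist u v ≤ m} := fun m n hmn =>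
    Set.inter_subset_inter_right S fun v (hv : G.edist u v ≤ m) => hv.trans (Nat.cast_le.2 hmn)
  have hball (m : ℕ) (s : V) (hs : s ∈ (hfin m).toFinset) : s ∈ S ∧ G.edist u s ≤ m :=
    (hfin m).mem_toFinset.1 hs
  have hcard : (fun m : ℕ => ((S ∩ {v | G.edist u v ≤ m}).ncard : ℝ) * 2⁻¹ ^ m) =
      fun m => ((hfin m).toFinset.card : ℝ) * 2⁻¹ ^ m :=
    funext fun m => by rw [Set.ncard_eq_toFinset_card _ (hfin m)]
  rw [hcard]
  refine tendsto_card_mul_pow_of_sum_le (w := fun s => (2⁻¹ : ℝ) ^ G.dist u s) (C := 2)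
    (fun m n hmn => Set.Finite.toFinset_mono (hmono hmn))
    (by norm_num) (by norm_num) (fun m s hs => ?_) fun m => ?_
  · exact pow_le_pow_of_le_one (by norm_num) (by norm_num)
      (dist_le_of_edist_le (hball m s hs).2)
  · exact hS.sum_inv_two_pow_dist_le_two hu (m + 1) _ (fun s hs => (hball m s hs).1)
      fun s hs => ⟨reachable_of_edist_le (hball m s hs).2,
        Nat.lt_succ_of_le (dist_le_of_edist_le (hball m s hs).2)⟩

theorem ExpIndepSet.tendsto_ncard_inter_edist_le_div {S : Set V} (hS : ExpIndepSet G S)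
    {s₀ x : V} (hs₀ : s₀ ∈ S) (hx : G.Reachable s₀ x) :
    Tendsto (fun k : ℕ => ((S ∩ {v | G.edist x v ≤ k}).ncard : ℝ) / (3 * 2 ^ k - 2))
      atTop (𝓝 0) := by
  set d := G.dist s₀ x
  have hlim := ((hS.tendsto_ncard_inter_edist_le_mul hs₀).comp
    (tendsto_add_atTop_nat d)).const_mul ((2 : ℝ) ^ d)
  rw [mul_zero] at hlim
  have hden (k : ℕ) : (2 : ℝ) ^ k ≤ 3 * 2 ^ k - 2 := by
    linarith [one_le_pow₀ (by norm_num : (1 : ℝ) ≤ 2) (n := k)]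
  refine squeeze_zero (fun k => div_nonneg (Nat.cast_nonneg _)
    ((pow_nonneg zero_le_two k).trans (hden k))) (fun k => ?_) hlim
  have hsub : S ∩ {v | G.edist x v ≤ k} ⊆ S ∩ {v | G.edist s₀ v ≤ ↑(k + d)} :=
    fun v ⟨hvS, hv⟩ => ⟨hvS, calc
      G.edist s₀ v ≤ G.edist s₀ x + G.edist x v := SimpleGraph.edist_triangle
      _ ≤ d + k := by rw [← hx.coe_dist_eq_edist]; gcongr; exact hv
      _ = ↑(k + d) := by push_cast; ring⟩
  have hncard := Set.ncard_le_ncard hsub (hS.finite_inter_edist_le hs₀ (k + d))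
  calc ((S ∩ {v | G.edist x v ≤ k}).ncard : ℝ) / (3 * 2 ^ k - 2)
      ≤ (S ∩ {v | G.edist s₀ v ≤ ↑(k + d)}).ncard / 2 ^ k :=
        div_le_div₀ (Nat.cast_nonneg _) (by exact_mod_cast hncard) (by positivity) (hden k)
    _ = 2 ^ d * ((S ∩ {v | G.edist s₀ v ≤ ↑(k + d)}).ncard * 2⁻¹ ^ (k + d)) := by
        rw [pow_add, inv_pow, inv_pow]
        field_simp

end SimpleGraph

theorem stmt3_general {V : Type*} (G : SimpleGraph V) (S : Set V) (ustar : V)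
    (h : 0 < ballDensity G S ustar) :
    ¬ ExpIndepSet G S := by
  intro hS
  refine h.ne' (Tendsto.limsup_eq ?_)
  by_cases hS₀ : ∃ s₀ ∈ S, G.Reachable s₀ ustar
  · obtain ⟨s₀, hs₀, hreach⟩ := hS₀
    exact hS.tendsto_ncard_inter_edist_le_div hs₀ hreach
  · push Not at hS₀
    have hempty (k : ℕ) : S ∩ {v | G.edist ustar v ≤ k} = ∅ :=
      Set.eq_empty_of_forall_notMem fun v ⟨hv, hk⟩ => hS₀ v hv (reachable_of_edist_le hk).symm
    simp [hempty]

/-- If `S` is a set of vertices of the infinite cubic tree and `f(u*,S) > 0` for some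
vertex `u*`, then `S` is not an exponentially independent set. -/
theorem stmt3 {V : Type*} (G : SimpleGraph V) (hG : IsInfCubicTree G)
    (S : Set V) (ustar : V) (h : 0 < ballDensity G S ustar) :
    ¬ ExpIndepSet G S :=
  stmt3_general G S ustar h
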